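/- arXiv:2208.09254 — 7 statements merged into one kernel-verified Lean document; each statement's English description precedes it below -/
import Mathlib

section
/- For every IMAB instance I = (f_1, …, f_k) with k arms and every time horizon T ∈ ℕ, there exists an arm j ∈ {1,…,k} such that pulling arm j for all T steps is offline optimal: for every tuple of nonnegative integers (M_1, …, M_k) with M_1 + ⋯ + M_k = T, one has Σ_{i=1}^k Σ_{n=1}^{M_i} f_i(n) ≤ Σ_{n=1}^T f_j(n); equivalently OPT(I,T) = max_{j∈[k]} Rew_{f_j}(T). -/
open scoped Classical

/-- A reward function: bounded in [0,1], nondecreasing, with decreasing marginal returns. -/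
def IsRewardFn (f : ℕ → ℝ) : Prop :=
  (∀ n, 0 ≤ f n) ∧ (∀ n, f n ≤ 1) ∧ Monotone f ∧
    ∀ n, 1 ≤ n → f (n + 1) - f n ≤ f n - f (n - 1)

/-- Cumulative reward from pulling an arm with reward function `f` for `N` pulls. -/
noncomputable def Rew (f : ℕ → ℝ) (N : ℕ) : ℝ := ∑ n ∈ Finset.Icc 1 N, f n

/-- Offline optimum: the best total reward over all allocations of `T` pulls to the `k` arms. -/
noncomputable def OPT {k : ℕ} (f : Fin k → ℕ → ℝ) (T : ℕ) : ℝ :=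
  sSup {x : ℝ | ∃ M : Fin k → ℕ, (∑ i, M i) = T ∧ x = ∑ i, Rew (f i) (M i)}

lemma Rew_avg_mono {f : ℕ → ℝ} (hmono : Monotone f)
    (h0 : ∀ n, 0 ≤ f n) {M T : ℕ} (hMT : M ≤ T) :
    (T : ℝ) * Rew f M ≤ (M : ℝ) * Rew f T := by
  have hIcc : ∀ N : ℕ, Finset.Icc 1 N = Finset.Ioc 0 N := by
    intro N; ext x; simp [Nat.lt_iff_add_one_le]
  have hsplit : Rew f T = Rew f M + ∑ n ∈ Finset.Ioc M T, f n := by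
    unfold Rew
    rw [hIcc, hIcc, ← Finset.sum_Ioc_consecutive _ (Nat.zero_le M) hMT]
  have hA : Rew f M ≤ (M : ℝ) * f M := by
    unfold Rew
    calc ∑ n ∈ Finset.Icc 1 M, f n ≤ (Finset.Icc 1 M).card • f M :=
          Finset.sum_le_card_nsmul _ _ _ (fun x hx => hmono (Finset.mem_Icc.mp hx).2)
      _ = (M : ℝ) * f M := by simp [Nat.card_Icc, nsmul_eq_mul]
  have hB : ((T : ℝ) - M) * f M ≤ ∑ n ∈ Finset.Ioc M T, f n := by
    calc ((T : ℝ) - M) * f M = (Finset.Ioc M T).card • f M := by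
          rw [Nat.card_Ioc, nsmul_eq_mul, Nat.cast_sub hMT]
      _ ≤ ∑ n ∈ Finset.Ioc M T, f n :=
          Finset.card_nsmul_le_sum _ _ _
            (fun x hx => hmono (le_of_lt (Finset.mem_Ioc.mp hx).1))
  have hRM : 0 ≤ Rew f M := Finset.sum_nonneg fun n _ => h0 n
  have hfM : 0 ≤ f M := h0 M
  have hTM : (M : ℝ) ≤ (T : ℝ) := by exact_mod_cast hMT
  have hM0 : (0 : ℝ) ≤ (M : ℝ) := by positivity
  nlinarith [mul_le_mul_of_nonneg_left hB hM0,
    mul_le_mul_of_nonneg_left hA (sub_nonneg.mpr hTM)]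

lemma Rew_nonneg {f : ℕ → ℝ} (h0 : ∀ n, 0 ≤ f n) (N : ℕ) : 0 ≤ Rew f N :=
  Finset.sum_nonneg fun n _ => h0 n

/-- For every IMAB instance and time horizon `T`, some single arm `j` pulled for all `T`
steps is offline optimal: every allocation of `T` pulls earns at most `Rew (f j) T`
(equivalently, `OPT I T = max_j Rew (f j) T`). -/
theorem single_arm_offline_optimal (k : ℕ) (hk : 0 < k) (f : Fin k → ℕ → ℝ)
    (hf : ∀ i, IsRewardFn (f i)) (T : ℕ) :
    ∃ j : Fin k, ∀ M : Fin k → ℕ, (∑ i, M i) = T →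
      (∑ i, Rew (f i) (M i)) ≤ Rew (f j) T := by
  haveI : Nonempty (Fin k) := ⟨⟨0, hk⟩⟩
  obtain ⟨j, hj⟩ := Finite.exists_max (fun i : Fin k => Rew (f i) T)
  refine ⟨j, fun M hM => ?_⟩
  rcases Nat.eq_zero_or_pos T with hT | hT
  · have hMi : ∀ i, M i = 0 := by
      intro i
      have := Finset.sum_eq_zero_iff.mp (hM.trans hT)
      exact this i (Finset.mem_univ i)
    simp only [hMi, hT]
    simp [Rew]
  · have hTpos : (0 : ℝ) < (T : ℝ) := by exact_mod_cast hT
    have key : (T : ℝ) * (∑ i, Rew (f i) (M i)) ≤ (T : ℝ) * Rew (f j) T := by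
      calc (T : ℝ) * (∑ i, Rew (f i) (M i)) = ∑ i, (T : ℝ) * Rew (f i) (M i) := by
            rw [Finset.mul_sum]
        _ ≤ ∑ i, (M i : ℝ) * Rew (f j) T := by
            apply Finset.sum_le_sum
            intro i _
            have hMiT : M i ≤ T := hM ▸ Finset.single_le_sum (f := M)
              (fun _ _ => Nat.zero_le _) (Finset.mem_univ i)
            obtain ⟨h0, _, hmono, _⟩ := hf i
            calc (T : ℝ) * Rew (f i) (M i) ≤ (M i : ℝ) * Rew (f i) T :=
                  Rew_avg_mono hmono h0 hMiT
              _ ≤ (M i : ℝ) * Rew (f j) T :=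
                  mul_le_mul_of_nonneg_left (hj i) (by positivity)
        _ = (T : ℝ) * Rew (f j) T := by
            rw [← Finset.sum_mul]
            congr 1
            exact_mod_cast congrArg (Nat.cast : ℕ → ℝ) hM
    exact le_of_mul_le_mul_left key hTpos
end

section
/- Let f_1 and f_2 be two reward functions and T ∈ ℕ a time horizon with Σ_{n=1}^T f_1(n) ≥ Σ_{n=1}^T f_2(n). Then for every integer m with 0 ≤ m ≤ T, Σ_{n=1}^{T−m} f_1(n) + Σ_{n=1}^{m} f_2(n) ≤ Σ_{n=1}^T f_1(n); that is, in a two-armed instance, pulling the arm with the larger T-step cumulative reward for all T steps dominates every split of the T pulls between the two arms. -/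
open scoped Classical

/-!
For a nondecreasing `f`, the average of `f` over `(k, k + m]` is at least `f k`, which is at
least its average over `(0, k]`. Hence the prefix averages `Rew f N / N` are nondecreasing in
`N`, and the average over a final segment `(k, T]` dominates the average over `(0, T]`. With
`T = k + m`, the average of `f₂` over the first `m` pulls is at most that of `f₂` over `T` pulls,
hence at most that of `f₁` over `T` pulls, hence at most that of `f₁` over the last `m` of its
`T` pulls: moving the `m` pulls from `f₂` back to `f₁` can only gain.
-/

lemma rew_add_sum_Ioc (f : ℕ → ℝ) {a b : ℕ} (hab : a ≤ b) :
    Rew f a + ∑ n ∈ Finset.Ioc a b, f n = Rew f b :=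
  Finset.sum_Ioc_consecutive f (Nat.zero_le a) hab

section Monotone

variable {f : ℕ → ℝ} (hf : Monotone f) (k m : ℕ)
include hf

lemma mul_rew_le_mul_sum_Ioc :
    (m : ℝ) * Rew f k ≤ k * ∑ n ∈ Finset.Ioc k (k + m), f n := by
  have hinit : Rew f k ≤ k * f k := by
    simpa [Rew] using Finset.sum_le_card_nsmul (Finset.Icc 1 k) f (f k)
      fun n hn ↦ hf (Finset.mem_Icc.mp hn).2
  have htail : m * f k ≤ ∑ n ∈ Finset.Ioc k (k + m), f n := by
    simpa using Finset.card_nsmul_le_sum (Finset.Ioc k (k + m)) f (f k)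
      fun n hn ↦ hf (Finset.mem_Ioc.mp hn).1.le
  calc (m : ℝ) * Rew f k ≤ m * (k * f k) := by gcongr
    _ = k * (m * f k) := by ring
    _ ≤ k * ∑ n ∈ Finset.Ioc k (k + m), f n := by gcongr

lemma mul_rew_le_mul_rew_add : ((k + m : ℕ) : ℝ) * Rew f m ≤ m * Rew f (k + m) := by
  have := mul_rew_le_mul_sum_Ioc hf m k
  rw [add_comm k, ← rew_add_sum_Ioc f (Nat.le_add_right m k)]
  push_cast
  linarith

lemma mul_rew_add_le_mul_sum_Ioc :
    (m : ℝ) * Rew f (k + m) ≤ (k + m : ℕ) * ∑ n ∈ Finset.Ioc k (k + m), f n := by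
  have := mul_rew_le_mul_sum_Ioc hf k m
  rw [← rew_add_sum_Ioc f (Nat.le_add_right k m)]
  push_cast
  linarith

end Monotone

lemma rew_le_sum_Ioc_of_rew_le {f₁ f₂ : ℕ → ℝ} (hf₁ : Monotone f₁) (hf₂ : Monotone f₂) (k m : ℕ)
    (hT : Rew f₂ (k + m) ≤ Rew f₁ (k + m)) :
    Rew f₂ m ≤ ∑ n ∈ Finset.Ioc k (k + m), f₁ n := by
  rcases Nat.eq_zero_or_pos (k + m) with hT0 | hTpos
  · obtain rfl : m = 0 := by omega
    simp [Rew]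
  have hTpos' : (0 : ℝ) < (k + m : ℕ) := by exact_mod_cast hTpos
  refine le_of_mul_le_mul_left ?_ hTpos'
  calc ((k + m : ℕ) : ℝ) * Rew f₂ m ≤ m * Rew f₂ (k + m) := mul_rew_le_mul_rew_add hf₂ k m
    _ ≤ m * Rew f₁ (k + m) := by gcongr
    _ ≤ (k + m : ℕ) * ∑ n ∈ Finset.Ioc k (k + m), f₁ n := mul_rew_add_le_mul_sum_Ioc hf₁ k m

/-- In a two-armed instance, pulling the arm with the larger `T`-step cumulative reward for
all `T` steps dominates every split of the `T` pulls between the two arms. -/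
theorem two_arm_single_arm_dominates (f₁ f₂ : ℕ → ℝ)
    (h₁ : IsRewardFn f₁) (h₂ : IsRewardFn f₂) (T : ℕ)
    (hT : Rew f₂ T ≤ Rew f₁ T) :
    ∀ m : ℕ, m ≤ T → Rew f₁ (T - m) + Rew f₂ m ≤ Rew f₁ T := by
  intro m hm
  obtain ⟨k, rfl⟩ : ∃ k, T = k + m := ⟨T - m, (Nat.sub_add_cancel hm).symm⟩
  rw [Nat.add_sub_cancel, ← rew_add_sum_Ioc f₁ (Nat.le_add_right k m)]
  have := rew_le_sum_Ioc_of_rew_le h₁.2.2.1 h₂.2.2.1 k m hT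
  linarith
end

section
/- For every number of arms k ≥ 3, every deterministic algorithm A for the IMAB problem with k arms, and every time horizon T ≥ k that is a multiple of k, there exists an IMAB instance I = (f_1, …, f_k) (each f_i a reward function) on which the policy regret of A is linear in T: OPT(I,T) − ALG_A(I,T) ≥ T/6. -/
open scoped Classical

/-- The history of a deterministic algorithm `A` (mapping past observations to the next arm)
run on the instance `f` for `t` steps: the list of (arm pulled, reward received). -/
noncomputable def algHist {k : ℕ} (A : List (Fin k × ℝ) → Fin k) (f : Fin k → ℕ → ℝ) :
    ℕ → List (Fin k × ℝ)
  | 0 => []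
  | t + 1 =>
    let h := algHist A f t
    let i := A h
    h ++ [(i, f i ((h.countP fun p => decide (p.1 = i)) + 1))]

/-- The number of pulls of arm `i` in the history `h`. -/
def armPulls {k : ℕ} (h : List (Fin k × ℝ)) (i : Fin k) : ℕ :=
  h.countP fun p => decide (p.1 = i)

/-! The adversary runs `A` on `k` identical arms `n ↦ min n c / T` with `c = T / k`. Some arm `j`
is pulled at most `T / k` times, so raising its cap from `c` to `T` does not change what `A`
observes, and `A` still collects at most the reward of a single `c`-capped arm pulled `T` times
(cumulative rewards of a monotone arm are superadditive). Pulling arm `j` alone `T` times earns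
`(T + 1) / 2`, so the regret is at least `(T - c) (T - c + 1) / (2 T) ≥ 2 T / 9` once `k ≥ 3`. -/

open Finset

section Rew

theorem Rew_zero (f : ℕ → ℝ) : Rew f 0 = 0 := by simp [Rew]

theorem Rew_succ (f : ℕ → ℝ) (N : ℕ) : Rew f (N + 1) = Rew f N + f (N + 1) :=
  sum_Icc_succ_top (by omega) f

theorem Rew_congr {f g : ℕ → ℝ} {N : ℕ} (h : ∀ n, 1 ≤ n → n ≤ N → f n = g n) :
    Rew f N = Rew g N :=
  sum_congr rfl fun n hn => h n (mem_Icc.1 hn).1 (mem_Icc.1 hn).2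

theorem Rew_le_of_le_one {f : ℕ → ℝ} (hf : ∀ n, f n ≤ 1) (N : ℕ) : Rew f N ≤ N := by
  calc Rew f N ≤ ∑ _n ∈ Icc 1 N, (1 : ℝ) := sum_le_sum fun n _ => hf n
    _ = N := by simp

theorem Rew_add_Rew_le {f : ℕ → ℝ} (hf : Monotone f) (a b : ℕ) :
    Rew f a + Rew f b ≤ Rew f (a + b) := by
  induction b with
  | zero => simp [Rew_zero]
  | succ b ih =>
    rw [← Nat.add_assoc, Rew_succ, Rew_succ]
    linarith [hf (show b + 1 ≤ a + b + 1 by omega)]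

theorem sum_Rew_le {ι : Type*} {f : ℕ → ℝ} (hf : Monotone f) (s : Finset ι) (N : ι → ℕ) :
    ∑ i ∈ s, Rew f (N i) ≤ Rew f (∑ i ∈ s, N i) := by
  have := le_sum_of_subadditive (fun M => -Rew f M) (by simp [Rew_zero])
    (fun a b => by linarith [Rew_add_Rew_le hf a b]) s N
  simpa [sum_neg_distrib] using this

theorem Rew_le_OPT {k : ℕ} {f : Fin k → ℕ → ℝ} (hf : ∀ i n, f i n ≤ 1) (j : Fin k) (T : ℕ) :
    Rew (f j) T ≤ OPT f T := by
  refine le_csSup ⟨T, ?_⟩ ⟨Pi.single j T, by simp, ?_⟩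
  · rintro x ⟨M, hM, rfl⟩
    calc ∑ i, Rew (f i) (M i) ≤ ∑ i, (M i : ℝ) := sum_le_sum fun i _ => Rew_le_of_le_one (hf i) _
      _ = T := by exact_mod_cast hM
  · rw [sum_eq_single j (fun i _ hi => by simp [hi, Rew_zero]) (by simp)]
    simp

end Rew

section algHist

variable {k : ℕ} (A : List (Fin k × ℝ) → Fin k)

theorem algHist_succ (f : Fin k → ℕ → ℝ) (t : ℕ) :
    algHist A f (t + 1) = algHist A f t ++
      [(A (algHist A f t),
        f (A (algHist A f t)) (armPulls (algHist A f t) (A (algHist A f t)) + 1))] := rfl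

theorem armPulls_append (h h' : List (Fin k × ℝ)) (i : Fin k) :
    armPulls (h ++ h') i = armPulls h i + armPulls h' i := List.countP_append

theorem sum_armPulls (h : List (Fin k × ℝ)) : ∑ i, armPulls h i = h.length := by
  induction h with
  | nil => simp [armPulls]
  | cons p h ih =>
    simp only [armPulls, List.countP_cons, sum_add_distrib] at ih ⊢
    simp [ih]

theorem length_algHist (f : Fin k → ℕ → ℝ) (t : ℕ) : (algHist A f t).length = t := by
  induction t with
  | zero => rfl
  | succ t ih => simp [algHist_succ, ih]

theorem monotone_armPulls_algHist (f : Fin k → ℕ → ℝ) (i : Fin k) :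
    Monotone fun t => armPulls (algHist A f t) i :=
  monotone_nat_of_le_succ fun t => by simp [algHist_succ, armPulls_append]

theorem algHist_eq_of_agree {f g : Fin k → ℕ → ℝ} {T : ℕ}
    (hfg : ∀ i n, 1 ≤ n → n ≤ armPulls (algHist A g T) i → f i n = g i n) {t : ℕ}
    (ht : t ≤ T) : algHist A f t = algHist A g t := by
  induction t with
  | zero => rfl
  | succ t ih =>
    rw [algHist_succ, algHist_succ, ih (by omega)]
    have hpulls := monotone_armPulls_algHist A g (A (algHist A g t)) ht
    simp only [algHist_succ, armPulls_append] at hpulls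
    rw [hfg _ _ (by omega) (by simpa [armPulls] using hpulls)]

end algHist

theorem exists_regret_ge_Rew_sub {k : ℕ} (A : List (Fin k × ℝ) → Fin k) (T : ℕ)
    {φ ψ : ℕ → ℝ} (hφ : IsRewardFn φ) (hψ : IsRewardFn ψ) (hψφ : ∀ n, k * n ≤ T → ψ n = φ n) :
    ∃ f : Fin k → ℕ → ℝ, (∀ i, IsRewardFn (f i)) ∧
      Rew ψ T - Rew φ T ≤ OPT f T - ∑ i, Rew (f i) (armPulls (algHist A f T) i) := by
  set g : Fin k → ℕ → ℝ := fun _ => φ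
  set N : Fin k → ℕ := fun i => armPulls (algHist A g T) i
  have hN : ∑ i, N i = T := by simp only [N, sum_armPulls, length_algHist]
  obtain ⟨j, -, hj⟩ := exists_min_image univ N ⟨A [], mem_univ _⟩
  have hkj : k * N j ≤ T := by
    simpa [← hN] using card_nsmul_le_sum univ N (N j) fun i _ => hj i (mem_univ i)
  set f := Function.update g j ψ
  have hagree : ∀ i n, n ≤ N i → f i n = g i n := by
    intro i n hn
    rcases eq_or_ne i j with rfl | hij
    · simpa [f, g] using hψφ n (le_trans (Nat.mul_le_mul_left k hn) hkj)
    · simp [f, hij]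
  have hfg : algHist A f T = algHist A g T :=
    algHist_eq_of_agree A (fun i n _ hn => hagree i n hn) le_rfl
  have hf : ∀ i, IsRewardFn (f i) := by
    intro i
    rcases eq_or_ne i j with rfl | hij
    · simpa [f] using hψ
    · simpa [f, g, hij] using hφ
  have hALG : ∑ i, Rew (f i) (N i) ≤ Rew φ T :=
    calc ∑ i, Rew (f i) (N i) = ∑ i, Rew φ (N i) :=
          sum_congr rfl fun i _ => Rew_congr fun n _ hn => hagree i n hn
      _ ≤ Rew φ T := hN ▸ sum_Rew_le hφ.2.2.1 univ N
  have hOPT : Rew ψ T ≤ OPT f T := by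
    simpa [f] using Rew_le_OPT (fun i => (hf i).2.1) j T
  refine ⟨f, hf, ?_⟩
  rw [hfg]
  linarith

def cappedLinear (γ : ℝ) (d n : ℕ) : ℝ := γ * (min n d : ℕ)

theorem isRewardFn_cappedLinear {γ : ℝ} (hγ : 0 ≤ γ) {d : ℕ} (hd : γ * d ≤ 1) :
    IsRewardFn (cappedLinear γ d) := by
  refine ⟨fun n => by unfold cappedLinear; positivity, fun n => ?_, fun a b hab => ?_,
    fun n _ => ?_⟩ <;> unfold cappedLinear
  · exact le_trans (mul_le_mul_of_nonneg_left (by exact_mod_cast min_le_right n d) hγ) hd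
  · exact mul_le_mul_of_nonneg_left (by exact_mod_cast min_le_min_right d hab) hγ
  · have : ((min (n + 1) d : ℕ) : ℝ) + (min (n - 1) d : ℕ) ≤ 2 * (min n d : ℕ) := by
      exact_mod_cast (show min (n + 1) d + min (n - 1) d ≤ 2 * min n d by omega)
    nlinarith

theorem Rew_cappedLinear_sub (γ : ℝ) (c T : ℕ) :
    Rew (cappedLinear γ T) T - Rew (cappedLinear γ c) T =
      γ * ((∑ n ∈ Icc 1 T, (n - c) : ℕ) : ℝ) := by
  rw [Rew, Rew, ← sum_sub_distrib, Nat.cast_sum, mul_sum]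
  refine sum_congr rfl fun n hn => ?_
  have hsplit : (n - c) + min n c = min n T := by have := (mem_Icc.1 hn).2; omega
  rw [cappedLinear, cappedLinear, ← hsplit, Nat.cast_add]
  ring

theorem two_mul_sum_Icc_tsub (c T : ℕ) :
    2 * ∑ n ∈ Icc 1 T, (n - c) = (T - c) * (T - c + 1) := by
  induction T with
  | zero => simp
  | succ T ih =>
    rw [sum_Icc_succ_top (by omega), mul_add, ih]
    rcases Nat.lt_or_ge T c with h | h
    · simp [Nat.sub_eq_zero_of_le h.le, Nat.sub_eq_zero_of_le (Nat.succ_le_of_lt h)]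
    · obtain ⟨d, rfl⟩ := Nat.exists_eq_add_of_le h
      rw [show c + d + 1 - c = d + 1 by omega, show c + d - c = d by omega]
      ring

theorem regret_lower_bound_general (k T : ℕ) (hk : 3 ≤ k)
    (A : List (Fin k × ℝ) → Fin k) :
    ∃ f : Fin k → ℕ → ℝ, (∀ i, IsRewardFn (f i)) ∧
      (T : ℝ) / 6 ≤ OPT f T - ∑ i, Rew (f i) (armPulls (algHist A f T) i) := by
  set c := T / k
  have hcT : 3 * c ≤ T := le_trans (Nat.mul_le_mul_right c hk) (Nat.mul_div_le T k)
  have hγ : (T : ℝ)⁻¹ * T ≤ 1 := by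
    rcases eq_or_ne (T : ℝ) 0 with h | h <;> simp [h]
  have hagree : ∀ n, k * n ≤ T → cappedLinear (T : ℝ)⁻¹ T n = cappedLinear (T : ℝ)⁻¹ c n := by
    intro n hn
    have hnc : n ≤ c := (Nat.le_div_iff_mul_le (by omega)).2 (by linarith [Nat.mul_comm k n])
    simp [cappedLinear, min_eq_left hnc, min_eq_left (show n ≤ T by omega)]
  obtain ⟨f, hf, hregret⟩ := exists_regret_ge_Rew_sub A T
    (isRewardFn_cappedLinear (by positivity) (le_trans (by gcongr; omega) hγ))
    (isRewardFn_cappedLinear (by positivity) hγ) hagree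
  refine ⟨f, hf, le_trans ?_ hregret⟩
  rw [Rew_cappedLinear_sub]
  rcases Nat.eq_zero_or_pos T with rfl | hT
  · simp
  have hsum : (2 : ℝ) * ((∑ n ∈ Icc 1 T, (n - c) : ℕ) : ℝ) = (T - c) * (T - c + 1) := by
    rw [← Nat.cast_sub (by omega)]
    exact_mod_cast two_mul_sum_Icc_tsub c T
  have hcT_real : (3 * c : ℝ) ≤ T := by exact_mod_cast hcT
  rw [le_inv_mul_iff₀ (by positivity)]
  nlinarith

/-- Any deterministic algorithm for the IMAB problem with `k ≥ 3` arms suffers policy regret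
at least `T / 6` on some instance, for every horizon `T ≥ k` that is a multiple of `k`. -/
theorem regret_lower_bound (k T : ℕ) (hk : 3 ≤ k) (hT : k ≤ T) (hdvd : k ∣ T)
    (A : List (Fin k × ℝ) → Fin k) :
    ∃ f : Fin k → ℕ → ℝ, (∀ i, IsRewardFn (f i)) ∧
      (T : ℝ) / 6 ≤ OPT f T - ∑ i, Rew (f i) (armPulls (algHist A f T) i) :=
  regret_lower_bound_general k T hk A
end

section
/- For every reward function f and all N, T ∈ ℕ with T ≥ 4 and T/2 ≤ N ≤ T, one has Σ_{n=1}^T f(n) ≤ (5T/4)·f(N). -/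
open scoped Classical

lemma diff_antitone (f : ℕ → ℝ) (hf : IsRewardFn f) :
    ∀ m n : ℕ, m ≤ n → f (n + 1) - f n ≤ f (m + 1) - f m := by
  intro m n hmn
  induction n, hmn using Nat.le_induction with
  | base => exact le_refl _
  | succ n hn ih =>
    have h := hf.2.2.2 (n + 1) (by omega)
    simp only [Nat.add_sub_cancel] at h
    linarith

lemma pair_le (f : ℕ → ℝ) (hf : IsRewardFn f) :
    ∀ k N : ℕ, k ≤ N → f (N + k) + f (N - k) ≤ 2 * f N := by
  intro k
  induction k with
  | zero => intro N _; simp; linarith [le_refl (f N)]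
  | succ k ih =>
    intro N hk
    have ihN := ih N (by omega)
    have h1 : f (N + (k + 1)) - f (N + k) ≤ f (N - k) - f (N - (k + 1)) := by
      have := diff_antitone f hf (N - (k + 1)) (N + k) (by omega)
      have e : N - (k + 1) + 1 = N - k := by omega
      rw [e] at this
      have e2 : N + k + 1 = N + (k + 1) := by omega
      rw [e2] at this
      exact this
    linarith

lemma sym_sum_le (f : ℕ → ℝ) (hf : IsRewardFn f) :
    ∀ M N : ℕ, M ≤ N → ∑ n ∈ Finset.Icc (N - M) (N + M), f n ≤ (2 * M + 1) * f N := by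
  intro M
  induction M with
  | zero => intro N _; simp
  | succ M ih =>
    intro N hM
    have hins : Finset.Icc (N - (M + 1)) (N + (M + 1)) =
        insert (N - (M + 1)) (Finset.Icc (N - M) (N + M + 1)) := by
      ext x
      simp only [Finset.mem_Icc, Finset.mem_insert]
      omega
    have htop : ∑ n ∈ Finset.Icc (N - M) (N + M + 1), f n =
        (∑ n ∈ Finset.Icc (N - M) (N + M), f n) + f (N + M + 1) := by
      rw [Finset.sum_Icc_succ_top (by omega)]
    rw [hins, Finset.sum_insert (by simp [Finset.mem_Icc]; omega), htop]
    have hpair := pair_le f hf (M + 1) N hM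
    have hih := ih N (by omega)
    have : ((N : ℕ) + M + 1) = N + (M + 1) := by omega
    rw [this]
    push_cast
    linarith

/-- For `T ≥ 4` and `T/2 ≤ N ≤ T`, the `T`-step cumulative reward is at most
`(5T/4) · f N`. -/
theorem rew_T_upper_bound_half (f : ℕ → ℝ) (hf : IsRewardFn f) (N T : ℕ)
    (hT : 4 ≤ T) (hNlow : T ≤ 2 * N) (hNhigh : N ≤ T) :
    Rew f T ≤ (5 * (T : ℝ) / 4) * f N := by
  have hfN : 0 ≤ f N := hf.1 N
  set M := T - N with hM
  have hMN : M ≤ N := by omega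
  have hTeq : T = N + M := by omega
  have ha : 2 * N - T = N - M := by omega
  -- split [0, T] into [0, 2N-T) and [2N-T, T]
  have hsplit : ∑ n ∈ Finset.Icc 0 T, f n =
      (∑ n ∈ Finset.Ico 0 (N - M), f n) + ∑ n ∈ Finset.Icc (N - M) (N + M), f n := by
    rw [← Finset.Ico_add_one_right_eq_Icc, ← Finset.Ico_add_one_right_eq_Icc, hTeq,
      ← Finset.sum_Ico_consecutive f (by omega : 0 ≤ N - M)
      (by omega : N - M ≤ N + M + 1)]
  have h1 : ∑ n ∈ Finset.Ico 0 (N - M), f n ≤ (N - M : ℕ) * f N := by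
    calc ∑ n ∈ Finset.Ico 0 (N - M), f n ≤ (Finset.Ico 0 (N - M)).card • f N := by
          apply Finset.sum_le_card_nsmul
          intro x hx
          exact hf.2.2.1 (by simp [Finset.mem_Ico] at hx; omega : x ≤ N)
      _ = (N - M : ℕ) * f N := by simp [nsmul_eq_mul]
  have h2 := sym_sum_le f hf M N hMN
  have hsub : Rew f T ≤ ∑ n ∈ Finset.Icc 0 T, f n := by
    unfold Rew
    have : Finset.Icc 0 T = insert 0 (Finset.Icc 1 T) := by
      ext x; simp [Finset.mem_Icc]; omega
    rw [this, Finset.sum_insert (by simp)]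
    linarith [hf.1 0]
  have hbound : Rew f T ≤ ((T : ℝ) + 1) * f N := by
    have : ((N - M : ℕ) : ℝ) + (2 * M + 1) = (T : ℝ) + 1 := by
      have : ((N - M : ℕ) : ℝ) = (N : ℝ) - (M : ℝ) := by
        push_cast [Nat.cast_sub hMN]; ring
      rw [this]
      have : (T : ℝ) = (N : ℝ) + (M : ℝ) := by exact_mod_cast congrArg Nat.cast hTeq
      rw [this]; ring
    nlinarith [hsub, hsplit, h1, h2]
  have hT4 : (T : ℝ) + 1 ≤ 5 * (T : ℝ) / 4 := by
    have : (4 : ℝ) ≤ (T : ℝ) := by exact_mod_cast hT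
    linarith
  calc Rew f T ≤ ((T : ℝ) + 1) * f N := hbound
    _ ≤ (5 * (T : ℝ) / 4) * f N := by nlinarith
end

section
/- For every reward function f and all N, T ∈ ℕ with T ≥ 4 and 1 ≤ N ≤ T/2, one has Σ_{n=1}^T f(n) ≤ (25T²/(32N))·f(N). -/
/-! A reward function `f` is concave on `ℕ` with `f 0 ≥ 0`, so `f n / n` is nonincreasing:
`f n ≤ max 1 (n / N) · f N` for every `n ≥ 1`. Summing over `1 ≤ n ≤ T` gives
`N · Σ f ≤ f N · Σ max N n = f N · (N² - N + T² + T) / 2`, and `16 (N² - N + T + T²) ≤ 25 T²`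
as soon as `2N ≤ T` and `4 ≤ T`. -/

open scoped Classical

open Finset

section IncrementAntitone

variable {f : ℕ → ℝ}

theorem IsRewardFn.antitone_increment (hf : IsRewardFn f) : Antitone fun k => f (k + 1) - f k :=
  antitone_nat_of_succ_le fun n => by simpa using hf.2.2.2 (n + 1) (by omega)

/-- The first `N` increments are each at least the `n`-th one and telescope to `f N - f 0`. -/
theorem natCast_mul_increment_le (hΔ : Antitone fun k => f (k + 1) - f k) (h0 : 0 ≤ f 0)
    {N n : ℕ} (hNn : N ≤ n) : N * (f (n + 1) - f n) ≤ f N := by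
  have hle : ∑ _k ∈ range N, (f (n + 1) - f n) ≤ ∑ k ∈ range N, (f (k + 1) - f k) :=
    sum_le_sum fun k hk => hΔ (by have := mem_range.mp hk; omega)
  rw [sum_const, card_range, nsmul_eq_mul, sum_range_sub (fun k => f k)] at hle
  linarith

theorem natCast_mul_le_natCast_mul_of_antitone_increment
    (hΔ : Antitone fun k => f (k + 1) - f k) (h0 : 0 ≤ f 0) {N n : ℕ} (hNn : N ≤ n) : N * f n ≤ n * f N := by
  induction n, hNn using Nat.le_induction with
  | base => rfl
  | succ m hNm ih =>
    have := natCast_mul_increment_le hΔ h0 hNm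
    push_cast
    linarith

end IncrementAntitone

theorem IsRewardFn.natCast_mul_le_max_mul {f : ℕ → ℝ} (hf : IsRewardFn f) (N n : ℕ) :
    N * f n ≤ (max N n : ℕ) * f N := by
  rcases le_total n N with hnN | hNn
  · rw [max_eq_left hnN]
    exact mul_le_mul_of_nonneg_left (hf.2.2.1 hnN) N.cast_nonneg
  · rw [max_eq_right hNn]
    exact natCast_mul_le_natCast_mul_of_antitone_increment hf.antitone_increment (hf.1 0) hNn

theorem IsRewardFn.natCast_mul_rew_le {f : ℕ → ℝ} (hf : IsRewardFn f) (N T : ℕ) :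
    N * Rew f T ≤ (∑ n ∈ Icc 1 T, max N n : ℕ) * f N := by
  rw [Rew, mul_sum, Nat.cast_sum, sum_mul]
  exact sum_le_sum fun n _ => hf.natCast_mul_le_max_mul N n

theorem two_mul_sum_Icc_max_add (N : ℕ) {T : ℕ} (hNT : N ≤ T) :
    2 * ∑ n ∈ Icc 1 T, max N n + N = N ^ 2 + T ^ 2 + T := by
  induction T, hNT using Nat.le_induction with
  | base =>
    rw [sum_congr rfl fun n hn => max_eq_left (mem_Icc.mp hn).2, sum_const, Nat.card_Icc]
    simp only [add_tsub_cancel_right, smul_eq_mul]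
    ring
  | succ m hNm ih =>
    rw [sum_Icc_succ_top (by omega), max_eq_right (by omega)]
    linear_combination ih

/-- For `T ≥ 4` and `1 ≤ N ≤ T/2`, the `T`-step cumulative reward is at most
`(25T²/(32N)) · f N`. -/
theorem rew_T_upper_bound_small (f : ℕ → ℝ) (hf : IsRewardFn f) (N T : ℕ)
    (hT : 4 ≤ T) (hNlow : 1 ≤ N) (hNhigh : 2 * N ≤ T) :
    Rew f T ≤ (25 * (T : ℝ) ^ 2 / (32 * (N : ℝ))) * f N := by
  have hsum : 32 * ∑ n ∈ Icc 1 T, max N n ≤ 25 * T ^ 2 := by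
    have := two_mul_sum_Icc_max_add N (T := T) (by omega)
    nlinarith
  have hN : (0 : ℝ) < N := by exact_mod_cast hNlow
  rw [div_mul_eq_mul_div, le_div_iff₀ (by positivity)]
  calc Rew f T * (32 * N) = 32 * (N * Rew f T) := by ring
    _ ≤ 32 * ((∑ n ∈ Icc 1 T, max N n : ℕ) * f N) :=
      mul_le_mul_of_nonneg_left (hf.natCast_mul_rew_le N T) (by norm_num)
    _ = (32 * ∑ n ∈ Icc 1 T, max N n : ℕ) * f N := by push_cast; ring
    _ ≤ 25 * T ^ 2 * f N := mul_le_mul_of_nonneg_right (by exact_mod_cast hsum) (hf.1 N)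
end

section
/- For every reward function f and all N, T ∈ ℕ with T ≥ 4 and T/2 ≤ N ≤ T, the cumulative rewards satisfy 5·Rew_f(N) ≥ Rew_f(T); i.e., Rew_f(αT)/Rew_f(T) ≥ 1/5 whenever α ≥ 1/2. -/
open scoped Classical

lemma superadd (f : ℕ → ℝ) (hf : IsRewardFn f) (a b : ℕ) : f (a + b) ≤ f a + f b := by
  obtain ⟨h0, h1, hmono, hconc⟩ := hf
  have hd : Antitone (fun n => f (n + 1) - f n) := by
    apply antitone_nat_of_succ_le
    intro n
    have := hconc (n + 1) (by omega)
    simpa using this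
  have h1' : (∑ i ∈ Finset.range a, (f (b + (i + 1)) - f (b + i))) = f (b + a) - f (b + 0) :=
    Finset.sum_range_sub (fun i => f (b + i)) a
  have h2' : (∑ i ∈ Finset.range a, (f (i + 1) - f i)) = f a - f 0 :=
    Finset.sum_range_sub f a
  have hle : (∑ i ∈ Finset.range a, (f (b + (i + 1)) - f (b + i))) ≤
      ∑ i ∈ Finset.range a, (f (i + 1) - f i) := by
    apply Finset.sum_le_sum
    intro i _
    exact hd (Nat.le_add_left i b)
  have hf0 := h0 0
  rw [h1', h2'] at hle
  have : f (b + a) - f b ≤ f a - f 0 := by simpa using hle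
  have hab : a + b = b + a := Nat.add_comm a b
  rw [hab]
  linarith

lemma pairing (f : ℕ → ℝ) (hf : IsRewardFn f) (N : ℕ) :
    (N : ℝ) * f N ≤ 2 * Rew f N := by
  obtain ⟨h0, h1, hmono, hconc⟩ := hf
  have hrew : Rew f N = ∑ i ∈ Finset.range N, f (1 + i) := by
    rw [Rew]
    have : Finset.Icc 1 N = Finset.Ico 1 (N + 1) := by rw [Finset.Ico_add_one_right_eq_Icc]
    rw [this, Finset.sum_Ico_eq_sum_range]
    simp
  have hrefl : (∑ i ∈ Finset.range N, f (1 + (N - 1 - i))) = ∑ i ∈ Finset.range N, f (1 + i) :=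
    Finset.sum_range_reflect (fun i => f (1 + i)) N
  have key : ∀ i ∈ Finset.range N, f N ≤ f (1 + i) + f (1 + (N - 1 - i)) := by
    intro i hi
    simp only [Finset.mem_range] at hi
    have hsum : (1 + i) + (1 + (N - 1 - i)) = N + 1 := by omega
    calc f N ≤ f ((1 + i) + (1 + (N - 1 - i))) := hmono (by omega)
      _ ≤ f (1 + i) + f (1 + (N - 1 - i)) := superadd f ⟨h0, h1, hmono, hconc⟩ _ _
  have := Finset.sum_le_sum key
  rw [Finset.sum_add_distrib, hrefl, Finset.sum_const, Finset.card_range, nsmul_eq_mul] at this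
  rw [hrew]
  linarith
  
/-- For `T ≥ 4` and `T/2 ≤ N ≤ T`, `5 · Rew f N ≥ Rew f T`;
i.e., `Rew f (αT) / Rew f T ≥ 1/5` whenever `α ≥ 1/2`. -/
theorem rew_ratio_half (f : ℕ → ℝ) (hf : IsRewardFn f) (N T : ℕ)
    (hT : 4 ≤ T) (hNlow : T ≤ 2 * N) (hNhigh : N ≤ T) :
    Rew f T ≤ 5 * Rew f N := by
  obtain ⟨h0, h1, hmono, hconc⟩ := hf
  have hsplit : Rew f N + ∑ n ∈ Finset.Ioc N T, f n = Rew f T := by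
    have h1' : Rew f N = ∑ n ∈ Finset.Ioc 0 N, f n := by
      rw [Rew]; congr 1
    have h2' : Rew f T = ∑ n ∈ Finset.Ioc 0 T, f n := by
      rw [Rew]; congr 1
    rw [h1', h2']
    exact Finset.sum_Ioc_consecutive f (Nat.zero_le N) hNhigh
  have htail : ∑ n ∈ Finset.Ioc N T, f n ≤ (T - N : ℕ) * f T := by
    calc ∑ n ∈ Finset.Ioc N T, f n ≤ ∑ n ∈ Finset.Ioc N T, f T :=
          Finset.sum_le_sum (fun n hn => hmono (Finset.mem_Ioc.mp hn).2)
      _ = (T - N : ℕ) * f T := by rw [Finset.sum_const, Nat.card_Ioc, nsmul_eq_mul]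
  have hfT : f T ≤ 2 * f N := by
    calc f T ≤ f (N + N) := hmono (by omega)
      _ ≤ f N + f N := superadd f ⟨h0, h1, hmono, hconc⟩ N N
      _ = 2 * f N := by ring
  have hpair := pairing f ⟨h0, h1, hmono, hconc⟩ N
  have hTN : ((T - N : ℕ) : ℝ) ≤ (N : ℝ) := by
    have : T - N ≤ N := by omega
    exact_mod_cast this
  have hfT0 : 0 ≤ f T := h0 T
  have hfN0 : 0 ≤ f N := h0 N
  have hN0 : (0 : ℝ) ≤ (N : ℝ) := Nat.cast_nonneg N
  nlinarith [htail, hfT, hpair]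
end

section
/- For every reward function f and all N, T ∈ ℕ with T ≥ 4 and 1 ≤ N ≤ T/2, the cumulative rewards satisfy 25T²·Rew_f(N) ≥ 16N²·Rew_f(T); i.e., writing N = αT/k with 0 < α ≤ k/2, Rew_f(αT/k)/Rew_f(T) ≥ 16α²/(25k²). -/
open scoped Classical

lemma incr_antitone {f : ℕ → ℝ} (hf : IsRewardFn f) :
    Antitone (fun n => f (n + 1) - f n) := by
  apply antitone_nat_of_succ_le
  intro n
  have := hf.2.2.2 (n + 1) (by omega)
  simpa using this

lemma incr_le_self {f : ℕ → ℝ} (hf : IsRewardFn f) (m : ℕ) :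
    (m : ℝ) * (f (m + 1) - f m) ≤ f m := by
  induction m with
  | zero => simpa using hf.1 0
  | succ m ih =>
      have hd : f (m + 2) - f (m + 1) ≤ f (m + 1) - f m :=
        incr_antitone hf (Nat.le_succ m)
      have hmul : (m : ℝ) * (f (m + 2) - f (m + 1)) ≤ (m : ℝ) * (f (m + 1) - f m) := by
        apply mul_le_mul_of_nonneg_left hd (by positivity)
      push_cast
      nlinarith

lemma fn_slope {f : ℕ → ℝ} (hf : IsRewardFn f) {m n : ℕ} (h : m ≤ n) :
    (m : ℝ) * f n ≤ (n : ℝ) * f m := by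
  induction n, h using Nat.le_induction with
  | base => exact le_rfl
  | succ n hmn ih =>
      have hd : f (n + 1) - f n ≤ f (m + 1) - f m := incr_antitone hf hmn
      have hmul : (m : ℝ) * (f (n + 1) - f n) ≤ (m : ℝ) * (f (m + 1) - f m) :=
        mul_le_mul_of_nonneg_left hd (by positivity)
      have h1 := incr_le_self hf m
      push_cast
      nlinarith

/-- For `T ≥ 4` and `1 ≤ N ≤ T/2`, `25T² · Rew f N ≥ 16N² · Rew f T`;
i.e., writing `N = αT/k`, `Rew f (αT/k) / Rew f T ≥ 16α²/(25k²)`. -/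
theorem rew_ratio_small (f : ℕ → ℝ) (hf : IsRewardFn f) (N T : ℕ)
    (hT : 4 ≤ T) (hNlow : 1 ≤ N) (hNhigh : 2 * N ≤ T) :
    16 * (N : ℝ) ^ 2 * Rew f T ≤ 25 * (T : ℝ) ^ 2 * Rew f N := by
  have hfpos := hf.1
  -- Rew as sum over Ioc 0
  have hIcc : ∀ M : ℕ, Rew f M = ∑ n ∈ Finset.Ioc 0 M, f n := by
    intro M
    rw [Rew]
    congr 1
  -- gauss sum
  have gauss : ∀ M : ℕ, (∑ n ∈ Finset.Ioc 0 M, (n : ℝ)) = M * (M + 1) / 2 := by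
    intro M
    induction M with
    | zero => simp
    | succ M ih =>
        rw [Finset.sum_Ioc_succ_top (Nat.zero_le _), ih]
        push_cast; ring
  -- Rew N lower bound: f N * (N*(N+1)/2) ≤ N * Rew N
  have hlow : f N * ((N : ℝ) * (N + 1) / 2) ≤ (N : ℝ) * Rew f N := by
    rw [hIcc, ← gauss N, Finset.mul_sum, Finset.mul_sum]
    apply Finset.sum_le_sum
    intro i hi
    simp only [Finset.mem_Ioc] at hi
    have := fn_slope hf hi.2
    nlinarith [this]
  -- split Rew T
  have hsplit : Rew f T = Rew f N + ∑ n ∈ Finset.Ioc N T, f n := by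
    rw [hIcc T, hIcc N, ← Finset.sum_Ioc_consecutive _ (Nat.zero_le N) (by omega : N ≤ T)]
  -- tail bound: N * tail ≤ f N * (T*(T+1)/2)
  have htail : (N : ℝ) * (∑ n ∈ Finset.Ioc N T, f n) ≤ f N * ((T : ℝ) * (T + 1) / 2) := by
    have h1 : (N : ℝ) * (∑ n ∈ Finset.Ioc N T, f n) ≤ ∑ n ∈ Finset.Ioc N T, (n : ℝ) * f N := by
      rw [Finset.mul_sum]
      apply Finset.sum_le_sum
      intro i hi
      simp only [Finset.mem_Ioc] at hi
      exact fn_slope hf hi.1.le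
    have h2 : (∑ n ∈ Finset.Ioc N T, (n : ℝ) * f N) ≤ (T : ℝ) * (T + 1) / 2 * f N := by
      rw [← Finset.sum_mul, ← gauss T]
      apply mul_le_mul_of_nonneg_right _ (hfpos N)
      apply Finset.sum_le_sum_of_subset_of_nonneg
      · apply Finset.Ioc_subset_Ioc (Nat.zero_le N) le_rfl
      · intro i _ _; positivity
    calc (N : ℝ) * (∑ n ∈ Finset.Ioc N T, f n) ≤ _ := h1
      _ ≤ (T : ℝ) * (T + 1) / 2 * f N := h2
      _ = f N * ((T : ℝ) * (T + 1) / 2) := by ring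
  -- nonnegativity
  have hRN : 0 ≤ Rew f N := by
    rw [Rew]; exact Finset.sum_nonneg fun i _ => hfpos i
  have hFN : 0 ≤ f N := hfpos N
  -- cast hypotheses
  have hTr : (4 : ℝ) ≤ T := by exact_mod_cast hT
  have hNr : (1 : ℝ) ≤ N := by exact_mod_cast hNlow
  have hNTr : 2 * (N : ℝ) ≤ T := by exact_mod_cast hNhigh
  set A := Rew f N with hA
  set F := f N with hFdef
  set RT := Rew f T with hRT
  have key : (N : ℝ) * RT ≤ (N : ℝ) * A + F * ((T : ℝ) * (T + 1) / 2) := by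
    rw [hsplit]; nlinarith [htail]
  have hT2N : (0:ℝ) ≤ (T:ℝ) - 2*N := by linarith
  have c1 : (0:ℝ) ≤ 16*(N:ℝ)*((N:ℝ)+1) := by positivity
  have h1 := mul_le_mul_of_nonneg_left key c1
  have c2 : (0:ℝ) ≤ 16*(T:ℝ)*((T:ℝ)+1) := by positivity
  have h2 := mul_le_mul_of_nonneg_left hlow c2
  have e1 : (0:ℝ) ≤ A*(N:ℝ)*((T:ℝ)-2*N)*((T:ℝ)+2*N) := by
    apply mul_nonneg; apply mul_nonneg; apply mul_nonneg hRN (by linarith)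
    exact hT2N; linarith
  have e2 : (0:ℝ) ≤ A*((T:ℝ)-2*N)*((T:ℝ)+2*N) := by
    apply mul_nonneg (mul_nonneg hRN hT2N); linarith
  have e3 : (0:ℝ) ≤ A*(T:ℝ)*((T:ℝ)-2*N) := by
    apply mul_nonneg (mul_nonneg hRN (by linarith)); exact hT2N
  have e4 : (0:ℝ) ≤ A*(N:ℝ)*(T:ℝ)*(T:ℝ) := by
    apply mul_nonneg; apply mul_nonneg (mul_nonneg hRN (by linarith)) (by linarith); linarith
  have e5 : (0:ℝ) ≤ A*(T:ℝ)*(T:ℝ) := by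
    apply mul_nonneg (mul_nonneg hRN (by linarith)); linarith
  have h3 : ((N:ℝ)+1) * (16 * (N : ℝ) ^ 2 * RT) ≤ ((N:ℝ)+1) * (25 * (T : ℝ) ^ 2 * A) := by
    nlinarith [h1, h2, e1, e2, e3, e4, e5]
  have hpos : (0:ℝ) < (N:ℝ)+1 := by linarith
  exact le_of_mul_le_mul_left h3 hpos
end
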